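/- arXiv:1609.07565 — 2 statements merged into one kernel-verified Lean document; each statement's English description precedes it below -/
import Mathlib

section
/- Let m be even with cbe(m) = (n_1, z_1, n_2, z_2) and n_2 ≤ z_2 < n_1 ≤ z_1. Then r(m) = 1 + 2^{n_1} + 2^{min{n_2, n_1 - z_2}}. Explicitly, the only nonzero values in the r-recursion for m occur at indices κ_1, ℓ_1, κ_2, ℓ_2 with r_{κ_1} = 2^{n_1} - 1, r_{κ_2} = 2^{min{n_2, n_1 - z_2}} - 1, and r_{ℓ_1} = r_{ℓ_2} = 1, where d_{κ_1} = 1^{z_1}0^{n_2}1^{z_2}, d_{κ_2} = 2^{z_2} - 1, and: if n_2 ≥ n_1 - z_2 then d_{ℓ_1} = 1^{n_2}0^{n_1}1^{z_2} and d_{ℓ_2} = 2^{n_1 - z_2} - 1, while if n_2 ≤ n_1 - z_2 then d_{ℓ_1} = 1^{n_2}0^{z_2}1^{n_1 - n_2 - z_2}0^{n_2}1^{z_2} and d_{ℓ_2} = 2^{n_2} - 1. -/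
open Finset

/-- `eVal m` = `e(m)`, the 2-adic valuation of `m + 1`. -/
def eVal (m : ℕ) : ℕ := padicValNat 2 (m + 1)

/-- `d0Val m` = `d_0 = 2 ^ k - m - 1`, where `k = Nat.size m` is the least integer
(positive, for `m ≥ 1`) with `2 ^ k > m`. -/
def d0Val (m : ℕ) : ℕ := 2 ^ Nat.size m - m - 1

/-- `dVal m ℓ` = `d_ℓ = d_0 - 2 ^ e · ℓ`. -/
def dVal (m ℓ : ℕ) : ℕ := d0Val m - 2 ^ eVal m * ℓ

/-- `tVal m` = `t = d_0 / 2 ^ e - 1`. -/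
def tVal (m : ℕ) : ℕ := d0Val m / 2 ^ eVal m - 1

/-- One step of the `r`-recursion, given the partial sum
`S = d_0·r_0 + ⋯ + d_{ℓ-1}·r_{ℓ-1}`: the value is
`⌊(m - (2^e - 1) - S) / d_ℓ⌋` if `C(m + d_ℓ, d_ℓ)` is odd, and `0` otherwise. -/
def rStep (m ℓ S : ℕ) : ℕ :=
  if (m + dVal m ℓ).choose (dVal m ℓ) % 2 = 1 then
    (m - (2 ^ eVal m - 1) - S) / dVal m ℓ
  else 0

/-- `partialS m ℓ = d_0·r_0 + ⋯ + d_{ℓ-1}·r_{ℓ-1}`. -/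
def partialS (m : ℕ) : ℕ → ℕ
  | 0 => 0
  | ℓ + 1 => partialS m ℓ + dVal m ℓ * rStep m ℓ (partialS m ℓ)

/-- `rVal m ℓ` is `r_ℓ` in the `r`-recursion. -/
def rVal (m ℓ : ℕ) : ℕ := rStep m ℓ (partialS m ℓ)

/-- `rOf m = r(m) = 1 + r_0 + r_1 + ⋯ + r_t`. -/
def rOf (m : ℕ) : ℕ := 1 + ∑ ℓ ∈ Finset.range (tVal m + 1), rVal m ℓ


/-- Disjointness of binary digits. -/
def BitDisj (a b : ℕ) : Prop := ∀ i, ¬ (a.testBit i = true ∧ b.testBit i = true)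

lemma bitdisj_iff (a b : ℕ) (h0 : ¬ (a % 2 = 1 ∧ b % 2 = 1)) :
    BitDisj a b ↔ BitDisj (a / 2) (b / 2) := by
  constructor
  · intro h i hi
    exact h (i + 1) (by simpa [Nat.testBit_add_one] using hi)
  · intro h i
    cases i with
    | zero => simpa using h0
    | succ i =>
      rw [Nat.testBit_add_one, Nat.testBit_add_one]
      exact h i

lemma choose_parity_aux : ∀ n a b : ℕ, a + b = n →
    ((a + b).choose b % 2 = 1 ↔ BitDisj a b) := by
  intro n
  induction n using Nat.strong_induction_on with
  | _ n IH =>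
    intro a b hab
    rcases Nat.eq_zero_or_pos n with hn | hn
    · have ha : a = 0 := by omega
      have hb : b = 0 := by omega
      subst ha hb
      simp [BitDisj]
    · have lucas : (a + b).choose b % 2 =
          ((a + b) % 2).choose (b % 2) * ((a + b) / 2).choose (b / 2) % 2 :=
        Choose.choose_modEq_choose_mod_mul_choose_div_nat (p := 2)
      by_cases hodd : a % 2 = 1 ∧ b % 2 = 1
      · -- both odd: choose 0 1 = 0, and bit 0 clashes
        have h2 : (a + b) % 2 = 0 := by omega
        have h3 : b % 2 = 1 := hodd.2
        rw [h2, h3] at lucas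
        simp only [Nat.choose] at lucas
        constructor
        · intro h; rw [lucas] at h; simp at h
        · intro h
          exact absurd (h 0 (by simp [hodd.1, hodd.2])) (by simp)
      · -- at most one odd: first factor is 1
        have hd2 : (a + b) / 2 = a / 2 + b / 2 := by omega
        have hfirst : ((a + b) % 2).choose (b % 2) = 1 := by
          have ha2 := Nat.mod_two_eq_zero_or_one a
          have hb2 := Nat.mod_two_eq_zero_or_one b
          have : (a + b) % 2 = a % 2 + b % 2 := by omega
          rcases ha2 with h | h <;> rcases hb2 with h' | h' <;>
            simp [this, h, h'] at hodd ⊢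
        rw [hfirst, one_mul, hd2] at lucas
        have hlt : a / 2 + b / 2 < n := by omega
        have := IH _ hlt (a / 2) (b / 2) rfl
        rw [lucas, this, bitdisj_iff a b hodd]

lemma choose_parity (a b : ℕ) : (a + b).choose b % 2 = 1 ↔ BitDisj a b :=
  choose_parity_aux (a + b) a b rfl


lemma testBit_div_pow (x s j : ℕ) : (x / 2^s).testBit j = x.testBit (s + j) := by
  induction s generalizing x with
  | zero => simp
  | succ s IH =>
    have : x / 2 ^ (s + 1) = (x / 2) / 2 ^ s := by
      rw [Nat.div_div_eq_div_mul, pow_succ, mul_comm]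
    rw [this, IH, Nat.testBit_div_two]
    congr 1; omega

lemma lt_pow_of_bits_false {x s : ℕ} (h : ∀ i, s ≤ i → x.testBit i = false) :
    x < 2 ^ s := by
  by_contra hx
  push_neg at hx
  have hxpos : 0 < x := lt_of_lt_of_le (Nat.pow_pos (n := s) (by norm_num : 0 < 2)) hx
  set j := Nat.size x - 1 with hj
  have hjs : s ≤ j := by
    have : s < Nat.size x := Nat.lt_size.mpr hx
    omega
  have h1 : 2 ^ j ≤ x := by
    apply Nat.lt_size.mp
    have := Nat.size_eq_zero (n := x)
    omega
  have h2 : x < 2 ^ (j + 1) := by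
    have : Nat.size x ≤ j + 1 := by omega
    exact lt_of_lt_of_le (Nat.lt_size_self x) (Nat.pow_le_pow_right (by norm_num) this)
  have hdiv : x / 2 ^ j = 1 := by
    have hp : 0 < 2 ^ j := Nat.pow_pos (n := j) (by norm_num : 0 < 2)
    have h2' : x / 2 ^ j < 2 := Nat.div_lt_of_lt_mul (by rw [pow_succ] at h2; linarith)
    have h1' : 1 ≤ x / 2 ^ j := (Nat.one_le_div_iff hp).mpr h1
    omega
  have : x.testBit j = true := by
    rw [Nat.testBit_eq_decide_div_mod_eq, hdiv]; norm_num
  rw [h j hjs] at this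
  exact Bool.noConfusion this

lemma testBit_block (a b i : ℕ) :
    ((2^a - 1) * 2^b).testBit i = (decide (b ≤ i) && decide (i < a + b)) := by
  rw [mul_comm, Nat.testBit_two_pow_mul, Nat.testBit_two_pow_sub_one]
  by_cases h : b ≤ i <;>
    simp [h, ge_iff_le, decide_eq_decide] <;> omega

lemma testBit_blockpair {x H L s : ℕ} (i : ℕ) (hx : x = 2^s * H + L) (hL : L < 2^s) :
    x.testBit i = if i < s then L.testBit i else H.testBit (i - s) :=
  hx ▸ Nat.testBit_two_pow_mul_add H hL i


def fAux (i2 i3 i4 N M : ℕ) (ℓ : ℕ) : ℕ :=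
  (if ℓ = 0 then N - 1 else 0) + (if ℓ = i2 then 1 else 0) +
  (if ℓ = i3 then M - 1 else 0) + (if ℓ = i4 then 1 else 0)

def gAux (i2 i3 i4 S1 S2 S3 m : ℕ) (ℓ : ℕ) : ℕ :=
  if ℓ = 0 then 0 else if ℓ ≤ i2 then S1 else if ℓ ≤ i3 then S2
  else if ℓ ≤ i4 then S3 else m


set_option maxHeartbeats 1000000 in
lemma step_aux (m D1 D2 P Q Z M N R2 : ℕ)
    (hrs : ∀ ℓ S, rStep m ℓ S =
      if (m + dVal m ℓ).choose (dVal m ℓ) % 2 = 1 then (m - S) / dVal m ℓ else 0)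
    (hdv : ∀ ℓ, dVal m ℓ = D1 - ℓ)
    (htv : tVal m = D1 - 1)
    (h1 : m = D1*(N-1) + (D2 + R2))
    (h2 : D2 = P*Q + (Z-1))
    (h3 : R2 = (Z-1)*(M-1) + (M-1))
    (hR2Q : R2 < Q) (hMZ : M ≤ Z) (hZQ : Z ≤ Q)
    (hN : 2 ≤ N) (hZ : 2 ≤ Z) (hM : 2 ≤ M) (hP : 1 ≤ P)
    (hR1D1 : D2 + R2 < D1)
    (hlowQ : (Z-1) + R2 < Q)
    (hdisj1 : (m + D1).choose D1 % 2 = 1)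
    (hdisj2 : (m + D2).choose D2 % 2 = 1)
    (hdisj3 : (m + (Z-1)).choose (Z-1) % 2 = 1)
    (hdisj4 : (m + (M-1)).choose (M-1) % 2 = 1)
    (hgen : ∀ d, (m + d).choose d % 2 = 1 → d % Q < Z) :
    rOf m = 1 + N + M ∧
    ∀ ℓ ≤ D1 - 1, rVal m ℓ = fAux (D1-D2) (D1-(Z-1)) (D1-(M-1)) N M ℓ := by
  have hQpos : 0 < Q := by omega
  have hPQ : 1*Q ≤ P*Q := Nat.mul_le_mul_right Q hP
  have hZD2 : Z - 1 < D2 := by omega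
  have hD2D1 : D2 < D1 := by omega
  have hD1pos : 0 < D1 := by omega
  have hD2pos : 0 < D2 := by omega
  have hR2D2 : R2 < D2 := by omega
  have hZM : (Z-1)*M = (Z-1)*(M-1) + (Z-1) := by
    have hM1 : M - 1 + 1 = M := by omega
    calc (Z-1)*M = (Z-1)*((M-1)+1) := by rw [hM1]
    _ = (Z-1)*(M-1) + (Z-1) := by ring
  have ho1 : 0 < D1 - D2 := by omega
  have ho2 : D1 - D2 < D1 - (Z-1) := by omega
  have ho3 : D1 - (Z-1) ≤ D1 - (M-1) := by omega
  have ho4 : D1 - (M-1) < D1 := by omega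
  set i2 := D1 - D2 with hi2
  set i3 := D1 - (Z-1) with hi3
  set i4 := D1 - (M-1) with hi4
  have hstep : ∀ ℓ, ℓ < D1 →
      rStep m ℓ (gAux i2 i3 i4 (D1*(N-1)) (D1*(N-1)+D2) (D1*(N-1)+D2+(Z-1)*(M-1)) m ℓ)
        = fAux i2 i3 i4 N M ℓ ∧
      gAux i2 i3 i4 (D1*(N-1)) (D1*(N-1)+D2) (D1*(N-1)+D2+(Z-1)*(M-1)) m ℓ
        + (D1-ℓ) * fAux i2 i3 i4 N M ℓ
        = gAux i2 i3 i4 (D1*(N-1)) (D1*(N-1)+D2) (D1*(N-1)+D2+(Z-1)*(M-1)) m (ℓ+1) := by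
    intro ℓ hℓ
    rw [hrs, hdv]
    rcases eq_or_ne ℓ 0 with rfl | hℓ0
    · -- ℓ = 0, d = D1
      have hg0 : gAux i2 i3 i4 (D1*(N-1)) (D1*(N-1)+D2) (D1*(N-1)+D2+(Z-1)*(M-1)) m 0 = 0 := by
        simp [gAux]
      have hg1 : gAux i2 i3 i4 (D1*(N-1)) (D1*(N-1)+D2) (D1*(N-1)+D2+(Z-1)*(M-1)) m 1
          = D1*(N-1) := by
        simp only [gAux]; rw [if_neg (by omega), if_pos (by omega)]
      have hf0 : fAux i2 i3 i4 N M 0 = N - 1 := by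
        simp only [fAux]
        rw [if_neg (by omega : ¬(0:ℕ) = i2), if_neg (by omega : ¬(0:ℕ) = i3),
          if_neg (by omega : ¬(0:ℕ) = i4)]
        simp
      rw [Nat.sub_zero, hg0, hg1, hf0, if_pos hdisj1]
      refine ⟨?_, by omega⟩
      rw [Nat.sub_zero, h1, Nat.mul_add_div hD1pos, Nat.div_eq_of_lt hR1D1]; omega
    rcases lt_or_ge ℓ i2 with hc | hc
    · -- 0 < ℓ < i2, d ∈ (D2, D1)
      have hg : gAux i2 i3 i4 (D1*(N-1)) (D1*(N-1)+D2) (D1*(N-1)+D2+(Z-1)*(M-1)) m ℓ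
          = D1*(N-1) := by
        simp only [gAux]; rw [if_neg hℓ0, if_pos (by omega)]
      have hg' : gAux i2 i3 i4 (D1*(N-1)) (D1*(N-1)+D2) (D1*(N-1)+D2+(Z-1)*(M-1)) m (ℓ+1)
          = D1*(N-1) := by
        simp only [gAux]; rw [if_neg (by omega), if_pos (by omega)]
      have hf : fAux i2 i3 i4 N M ℓ = 0 := by
        simp only [fAux]
        rw [if_neg hℓ0, if_neg (by omega), if_neg (by omega), if_neg (by omega)]
      rw [hg, hg', hf]
      have hmS : m - D1*(N-1) = D2 + R2 := by omega
      refine ⟨?_, by omega⟩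
      split_ifs with hodd
      · rw [hmS]
        apply Nat.div_eq_of_lt
        have hmod := hgen (D1 - ℓ) hodd
        have hdm := Nat.div_add_mod' (D1 - ℓ) Q
        have hlt : P < (D1 - ℓ) / Q := by
          by_contra hle
          push_neg at hle
          have := Nat.mul_le_mul_right Q hle
          omega
        have h5 : (P+1) * Q ≤ (D1 - ℓ) / Q * Q := Nat.mul_le_mul_right Q (by omega)
        have h6 : (P+1)*Q = P*Q + Q := by ring
        omega
      · rfl
    rcases eq_or_lt_of_le hc with heq | hc2
    · -- ℓ = i2, d = D2
      have hd : D1 - ℓ = D2 := by omega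
      have hg : gAux i2 i3 i4 (D1*(N-1)) (D1*(N-1)+D2) (D1*(N-1)+D2+(Z-1)*(M-1)) m ℓ
          = D1*(N-1) := by
        simp only [gAux]; rw [if_neg hℓ0, if_pos (by omega)]
      have hg' : gAux i2 i3 i4 (D1*(N-1)) (D1*(N-1)+D2) (D1*(N-1)+D2+(Z-1)*(M-1)) m (ℓ+1)
          = D1*(N-1)+D2 := by
        simp only [gAux]; rw [if_neg (by omega), if_neg (by omega), if_pos (by omega)]
      have hf : fAux i2 i3 i4 N M ℓ = 1 := by
        simp only [fAux]
        rw [if_neg hℓ0, if_pos (by omega), if_neg (by omega), if_neg (by omega)]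
      rw [hd, hg, hg', hf, if_pos hdisj2]
      have hmS : m - D1*(N-1) = D2 + R2 := by omega
      refine ⟨?_, by omega⟩
      rw [hmS, show D2 + R2 = D2*1 + R2 from by ring, Nat.mul_add_div hD2pos,
        Nat.div_eq_of_lt hR2D2]
    rcases lt_or_ge ℓ i3 with hc3 | hc3
    · -- i2 < ℓ < i3, d ∈ (Z-1, D2)
      have hg : gAux i2 i3 i4 (D1*(N-1)) (D1*(N-1)+D2) (D1*(N-1)+D2+(Z-1)*(M-1)) m ℓ
          = D1*(N-1)+D2 := by
        simp only [gAux]; rw [if_neg hℓ0, if_neg (by omega), if_pos (by omega)]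
      have hg' : gAux i2 i3 i4 (D1*(N-1)) (D1*(N-1)+D2) (D1*(N-1)+D2+(Z-1)*(M-1)) m (ℓ+1)
          = D1*(N-1)+D2 := by
        simp only [gAux]; rw [if_neg (by omega), if_neg (by omega), if_pos (by omega)]
      have hf : fAux i2 i3 i4 N M ℓ = 0 := by
        simp only [fAux]
        rw [if_neg hℓ0, if_neg (by omega), if_neg (by omega), if_neg (by omega)]
      rw [hg, hg', hf]
      have hmS : m - (D1*(N-1)+D2) = R2 := by omega
      refine ⟨?_, by omega⟩
      split_ifs with hodd
      · rw [hmS]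
        apply Nat.div_eq_of_lt
        have hmod := hgen (D1 - ℓ) hodd
        rcases lt_or_ge (D1 - ℓ) Q with hdQ | hdQ
        · rw [Nat.mod_eq_of_lt hdQ] at hmod
          omega
        · omega
      · rfl
    rcases eq_or_lt_of_le hc3 with heq3 | hc3'
    · -- ℓ = i3, d = Z-1
      have hd : D1 - ℓ = Z-1 := by omega
      have hg : gAux i2 i3 i4 (D1*(N-1)) (D1*(N-1)+D2) (D1*(N-1)+D2+(Z-1)*(M-1)) m ℓ
          = D1*(N-1)+D2 := by
        simp only [gAux]; rw [if_neg hℓ0, if_neg (by omega), if_pos (by omega)]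
      have hmS : m - (D1*(N-1)+D2) = R2 := by omega
      rw [hd, hg, if_pos hdisj3, hmS]
      rcases eq_or_lt_of_le hMZ with hMeq | hMlt
      · -- merge: M = Z, i3 = i4
        have hii : i3 = i4 := by omega
        have hf : fAux i2 i3 i4 N M ℓ = M := by
          simp only [fAux]
          rw [if_neg hℓ0, if_neg (by omega), if_pos (by omega), if_pos (by omega)]
          omega
        have hg' : gAux i2 i3 i4 (D1*(N-1)) (D1*(N-1)+D2) (D1*(N-1)+D2+(Z-1)*(M-1)) m (ℓ+1)
            = m := by
          simp only [gAux]
          rw [if_neg (by omega), if_neg (by omega), if_neg (by omega), if_neg (by omega)]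
        have hR2M : R2 = (Z-1)*M := by omega
        rw [hf, hg', hR2M]
        refine ⟨?_, ?_⟩
        · rw [show (Z-1)*M = (Z-1)*M + 0 from by ring, Nat.mul_add_div (by omega),
            Nat.zero_div]; omega
        · have : (Z-1)*M = (Z-1)*(M-1) + (Z-1) := hZM
          omega
      · -- non-merge: M < Z, i3 < i4
        have hii : i3 < i4 := by omega
        have hf : fAux i2 i3 i4 N M ℓ = M - 1 := by
          simp only [fAux]
          rw [if_neg hℓ0, if_neg (by omega), if_pos (by omega), if_neg (by omega)]
          omega
        have hg' : gAux i2 i3 i4 (D1*(N-1)) (D1*(N-1)+D2) (D1*(N-1)+D2+(Z-1)*(M-1)) m (ℓ+1)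
            = D1*(N-1)+D2+(Z-1)*(M-1) := by
          simp only [gAux]
          rw [if_neg (by omega), if_neg (by omega), if_neg (by omega), if_pos (by omega)]
        rw [hf, hg', h3]
        refine ⟨?_, by omega⟩
        rw [Nat.mul_add_div (by omega), Nat.div_eq_of_lt (by omega)]; omega
    rcases lt_or_ge ℓ i4 with hc4 | hc4
    · -- i3 < ℓ < i4, d ∈ (M-1, Z-1)
      have hg : gAux i2 i3 i4 (D1*(N-1)) (D1*(N-1)+D2) (D1*(N-1)+D2+(Z-1)*(M-1)) m ℓ
          = D1*(N-1)+D2+(Z-1)*(M-1) := by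
        simp only [gAux]
        rw [if_neg hℓ0, if_neg (by omega), if_neg (by omega), if_pos (by omega)]
      have hg' : gAux i2 i3 i4 (D1*(N-1)) (D1*(N-1)+D2) (D1*(N-1)+D2+(Z-1)*(M-1)) m (ℓ+1)
          = D1*(N-1)+D2+(Z-1)*(M-1) := by
        simp only [gAux]
        rw [if_neg (by omega), if_neg (by omega), if_neg (by omega), if_pos (by omega)]
      have hf : fAux i2 i3 i4 N M ℓ = 0 := by
        simp only [fAux]
        rw [if_neg hℓ0, if_neg (by omega), if_neg (by omega), if_neg (by omega)]
      rw [hg, hg', hf]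
      have hmS : m - (D1*(N-1)+D2+(Z-1)*(M-1)) = M - 1 := by omega
      have hmain : (m - (D1*(N-1)+D2+(Z-1)*(M-1))) / (D1 - ℓ) = 0 := by
        rw [hmS]; exact Nat.div_eq_of_lt (by omega)
      refine ⟨?_, by omega⟩
      split_ifs with hodd
      · exact hmain
      · rfl
    rcases eq_or_lt_of_le hc4 with heq4 | hc4'
    · -- ℓ = i4 (non-merge since ℓ ≠ i3), d = M-1
      have hd : D1 - ℓ = M-1 := by omega
      have hg : gAux i2 i3 i4 (D1*(N-1)) (D1*(N-1)+D2) (D1*(N-1)+D2+(Z-1)*(M-1)) m ℓ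
          = D1*(N-1)+D2+(Z-1)*(M-1) := by
        simp only [gAux]
        rw [if_neg hℓ0, if_neg (by omega), if_neg (by omega), if_pos (by omega)]
      have hg' : gAux i2 i3 i4 (D1*(N-1)) (D1*(N-1)+D2) (D1*(N-1)+D2+(Z-1)*(M-1)) m (ℓ+1)
          = m := by
        simp only [gAux]
        rw [if_neg (by omega), if_neg (by omega), if_neg (by omega), if_neg (by omega)]
      have hf : fAux i2 i3 i4 N M ℓ = 1 := by
        simp only [fAux]
        rw [if_neg hℓ0, if_neg (by omega), if_neg (by omega), if_pos (by omega)]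
      rw [hd, hg, hg', hf, if_pos hdisj4]
      have hmS : m - (D1*(N-1)+D2+(Z-1)*(M-1)) = M - 1 := by omega
      rw [hmS, Nat.div_self (by omega)]
      exact ⟨rfl, by omega⟩
    · -- ℓ > i4
      have hg : gAux i2 i3 i4 (D1*(N-1)) (D1*(N-1)+D2) (D1*(N-1)+D2+(Z-1)*(M-1)) m ℓ
          = m := by
        simp only [gAux]
        rw [if_neg hℓ0, if_neg (by omega), if_neg (by omega), if_neg (by omega)]
      have hg' : gAux i2 i3 i4 (D1*(N-1)) (D1*(N-1)+D2) (D1*(N-1)+D2+(Z-1)*(M-1)) m (ℓ+1)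
          = m := by
        simp only [gAux]
        rw [if_neg (by omega), if_neg (by omega), if_neg (by omega), if_neg (by omega)]
      have hf : fAux i2 i3 i4 N M ℓ = 0 := by
        simp only [fAux]
        rw [if_neg hℓ0, if_neg (by omega), if_neg (by omega), if_neg (by omega)]
      rw [hg, hg', hf, Nat.sub_self]
      refine ⟨?_, by omega⟩
      split_ifs with hodd
      · exact Nat.zero_div _
      · rfl
  -- partial sums follow g
  have hpS : ∀ ℓ, ℓ ≤ D1 →
      partialS m ℓ = gAux i2 i3 i4 (D1*(N-1)) (D1*(N-1)+D2) (D1*(N-1)+D2+(Z-1)*(M-1)) m ℓ := by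
    intro ℓ
    induction ℓ with
    | zero => intro _; simp [partialS, gAux]
    | succ ℓ IH =>
      intro hℓ
      have h1' := IH (by omega)
      have h2' := hstep ℓ (by omega)
      rw [partialS, h1', hdv, h2'.1, h2'.2]
  have hrV : ∀ ℓ ≤ D1 - 1, rVal m ℓ = fAux i2 i3 i4 N M ℓ := by
    intro ℓ hℓ
    rw [rVal, hpS ℓ (by omega)]
    exact (hstep ℓ (by omega)).1
  refine ⟨?_, hrV⟩
  -- the sum
  rw [rOf, htv]
  have hD1' : D1 - 1 + 1 = D1 := by omega
  rw [hD1']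
  have : ∑ ℓ ∈ Finset.range D1, rVal m ℓ = ∑ ℓ ∈ Finset.range D1, fAux i2 i3 i4 N M ℓ :=
    Finset.sum_congr rfl (fun ℓ hℓ => hrV ℓ (by simp at hℓ; omega))
  rw [this]
  simp only [fAux, Finset.sum_add_distrib]
  rw [Finset.sum_ite_eq' (Finset.range D1) 0 (fun _ => N - 1),
    Finset.sum_ite_eq' (Finset.range D1) i2 (fun _ => 1),
    Finset.sum_ite_eq' (Finset.range D1) i3 (fun _ => M - 1),
    Finset.sum_ite_eq' (Finset.range D1) i4 (fun _ => 1)]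
  rw [if_pos (by simp; omega), if_pos (by simp; omega), if_pos (by simp; omega),
    if_pos (by simp; omega)]
  omega

set_option maxHeartbeats 2000000 in
/-- Let `m = 1^{n₁}0^{z₁}1^{n₂}0^{z₂}` with
`n₂ ≤ z₂ < n₁ ≤ z₁`. Then `r(m) = 1 + 2^{n₁} + 2^{min{n₂, n₁-z₂}}`, and the only
nonzero values in the `r`-recursion occur at the indices `κ₁, ℓ₁, κ₂, ℓ₂` with
`r_{κ₁} = 2^{n₁} - 1`, `r_{κ₂} = 2^{min{n₂, n₁-z₂}} - 1`, `r_{ℓ₁} = r_{ℓ₂} = 1`,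
where `d_{κ₁} = 1^{z₁}0^{n₂}1^{z₂}`, `d_{κ₂} = 2^{z₂} - 1`, and:
if `n₂ ≥ n₁ - z₂` then `d_{ℓ₁} = 1^{n₂}0^{n₁}1^{z₂}`, `d_{ℓ₂} = 2^{n₁-z₂} - 1`,
while if `n₂ ≤ n₁ - z₂` then `d_{ℓ₁} = 1^{n₂}0^{z₂}1^{n₁-n₂-z₂}0^{n₂}1^{z₂}`
and `d_{ℓ₂} = 2^{n₂} - 1` (coinciding indices merging additively). -/
theorem rOf_two_blocks_mixed (n₁ z₁ n₂ z₂ m : ℕ)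
    (hn₂ : 1 ≤ n₂) (h₁ : n₂ ≤ z₂) (h₂ : z₂ < n₁) (h₃ : n₁ ≤ z₁)
    (hm : m = (2 ^ n₁ - 1) * 2 ^ (z₁ + n₂ + z₂) + (2 ^ n₂ - 1) * 2 ^ z₂) :
    rOf m = 1 + 2 ^ n₁ + 2 ^ min n₂ (n₁ - z₂) ∧
    ∀ ℓ ≤ tVal m,
      rVal m ℓ =
        (if ℓ = d0Val m - ((2 ^ z₁ - 1) * 2 ^ (n₂ + z₂) + (2 ^ z₂ - 1)) then 2 ^ n₁ - 1 else 0) +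
        (if ℓ = d0Val m -
            (if n₁ - z₂ ≤ n₂ then (2 ^ n₂ - 1) * 2 ^ (n₁ + z₂) + (2 ^ z₂ - 1)
             else (2 ^ n₂ - 1) * 2 ^ (n₁ + z₂) + (2 ^ (n₁ - n₂ - z₂) - 1) * 2 ^ (n₂ + z₂) +
               (2 ^ z₂ - 1))
          then 1 else 0) +
        (if ℓ = d0Val m - (2 ^ z₂ - 1) then 2 ^ min n₂ (n₁ - z₂) - 1 else 0) +
        (if ℓ = d0Val m - (2 ^ min n₂ (n₁ - z₂) - 1) then 1 else 0) := by
  have hmn1 : 1 ≤ min n₂ (n₁ - z₂) := by omega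
  have hmnn₂ : min n₂ (n₁ - z₂) ≤ n₂ := min_le_left _ _
  have b1 : (1:ℕ) ≤ 2^n₁ := Nat.one_le_two_pow
  have b2 : (1:ℕ) ≤ 2^z₁ := Nat.one_le_two_pow
  have b3 : (1:ℕ) ≤ 2^n₂ := Nat.one_le_two_pow
  have b4 : (1:ℕ) ≤ 2^z₂ := Nat.one_le_two_pow
  have b5 : (1:ℕ) ≤ 2^(min n₂ (n₁ - z₂)) := Nat.one_le_two_pow
  -- ARITH FACTS
  have hFacts :
      m = ((2^z₁-1)*2^(n₂+z₂)+(2^z₂-1))*(2^n₁-1)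
        + (((2^n₂-1)*2^(n₁-n₂)+(2^(n₁-n₂-z₂)-1))*2^(n₂+z₂)
           + (2^(min n₂ (n₁-z₂)+z₂)-1)) ∧
      ((2^n₂-1)*2^(n₁-n₂)+(2^(n₁-n₂-z₂)-1))*2^(n₂+z₂) + (2^(min n₂ (n₁-z₂)+z₂)-1)
        = (((2^n₂-1)*2^(n₁-n₂)+(2^(n₁-n₂-z₂)-1))*2^(n₂+z₂) + (2^z₂-1))
          + (2^(min n₂ (n₁-z₂))-1)*2^z₂ ∧
      ((2^n₂-1)*2^(n₁-n₂)+(2^(n₁-n₂-z₂)-1)) + 2 ≤ 2^z₁ := by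
    rcases le_or_gt n₁ (n₂ + z₂) with hc | hc
    · obtain ⟨u, v, w, s, e1, e2, e3, e4, hu, huw⟩ :
          ∃ u v w s, n₁ = u+v+w ∧ n₂ = u+v ∧ z₂ = v+w ∧ z₁ = u+v+w+s ∧ 1 ≤ u ∧ u ≤ w :=
        ⟨n₁ - z₂, n₂ - (n₁ - z₂), z₂ - (n₂ - (n₁ - z₂)), z₁ - n₁, by omega, by omega,
         by omega, by omega, by omega, by omega⟩
      subst e1 e2 e3 e4 hm
      simp only [show u+v+w - (u+v) = w from by omega,
        show u+v+w - (u+v) - (v+w) = 0 from by omega, show w - (v+w) = 0 from by omega,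
        show min (u+v) (u+v+w - (v+w)) = u from by omega, pow_zero]
      have b1 : (1:ℕ) ≤ 2^u := Nat.one_le_two_pow
      have b2 : (1:ℕ) ≤ 2^v := Nat.one_le_two_pow
      have b3 : (1:ℕ) ≤ 2^w := Nat.one_le_two_pow
      have b4 : (1:ℕ) ≤ 2^s := Nat.one_le_two_pow
      have c1 : (2:ℕ) ≤ 2^u := by
        calc (2:ℕ) = 2^1 := rfl
        _ ≤ 2^u := Nat.pow_le_pow_right (by norm_num) hu
      have c3 : (2:ℕ) ≤ 2^w := by
        calc (2:ℕ) = 2^1 := rfl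
        _ ≤ 2^w := Nat.pow_le_pow_right (by norm_num) (by omega)
      have q1 : (1:ℕ) ≤ 2^u*2^v := Nat.one_le_iff_ne_zero.mpr (by positivity)
      have q2 : (1:ℕ) ≤ 2^v*2^w := Nat.one_le_iff_ne_zero.mpr (by positivity)
      have q3 : (1:ℕ) ≤ 2^u*2^v*2^w := Nat.one_le_iff_ne_zero.mpr (by positivity)
      have q4 : (1:ℕ) ≤ 2^u*2^v*2^w*2^s := Nat.one_le_iff_ne_zero.mpr (by positivity)
      have q5 : (1:ℕ) ≤ 2^u*(2^v*2^w) := Nat.one_le_iff_ne_zero.mpr (by positivity)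
      refine ⟨?_, ?_, ?_⟩
      · simp only [pow_add]
        zify [b1, b2, b3, b4, q1, q2, q3, q4, q5]
        ring
      · simp only [pow_add]
        zify [b1, b2, b3, b4, q1, q2, q3, q4, q5]
        ring
      · simp only [pow_add]
        zify [b1, b2, b3, b4, q1, q2, q3, q4, q5]
        norm_num
        have c1' : (2:ℤ) ≤ 2^u := by exact_mod_cast c1
        have c3' : (2:ℤ) ≤ 2^w := by exact_mod_cast c3
        have b2' : (1:ℤ) ≤ 2^v := by exact_mod_cast b2
        have b4' : (1:ℤ) ≤ 2^s := by exact_mod_cast b4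
        nlinarith [mul_nonneg (mul_nonneg (mul_nonneg (by positivity : (0:ℤ) ≤ (2:ℤ)^u) (by positivity : (0:ℤ) ≤ (2:ℤ)^v)) (by positivity : (0:ℤ) ≤ (2:ℤ)^w)) (by linarith : (0:ℤ) ≤ (2:ℤ)^s - 1)]
    · obtain ⟨c, s, e1, e4⟩ : ∃ c s, n₁ = n₂+z₂+c ∧ z₁ = n₂+z₂+c+s :=
        ⟨n₁ - n₂ - z₂, z₁ - n₁, by omega, by omega⟩
      subst e1 e4 hm
      simp only [show n₂+z₂+c - n₂ = z₂+c from by omega,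
        show z₂+c - z₂ = c from by omega,
        show n₂+z₂+c - n₂ - z₂ = c from by omega,
        show min n₂ (n₂+z₂+c - z₂) = n₂ from by omega, pow_zero]
      have b1 : (1:ℕ) ≤ 2^n₂ := Nat.one_le_two_pow
      have b2 : (1:ℕ) ≤ 2^z₂ := Nat.one_le_two_pow
      have b3 : (1:ℕ) ≤ 2^c := Nat.one_le_two_pow
      have b4 : (1:ℕ) ≤ 2^s := Nat.one_le_two_pow
      have c1 : (2:ℕ) ≤ 2^n₂ := by
        calc (2:ℕ) = 2^1 := rfl
        _ ≤ 2^n₂ := Nat.pow_le_pow_right (by norm_num) hn₂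
      have c2 : (2:ℕ) ≤ 2^z₂ := by
        calc (2:ℕ) = 2^1 := rfl
        _ ≤ 2^z₂ := Nat.pow_le_pow_right (by norm_num) (by omega)
      have q1 : (1:ℕ) ≤ 2^n₂*2^z₂ := Nat.one_le_iff_ne_zero.mpr (by positivity)
      have q2 : (1:ℕ) ≤ 2^z₂*2^c := Nat.one_le_iff_ne_zero.mpr (by positivity)
      have q3 : (1:ℕ) ≤ 2^n₂*2^z₂*2^c := Nat.one_le_iff_ne_zero.mpr (by positivity)
      have q4 : (1:ℕ) ≤ 2^n₂*2^z₂*2^c*2^s := Nat.one_le_iff_ne_zero.mpr (by positivity)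
      have q5 : (1:ℕ) ≤ 2^n₂*(2^z₂*2^c) := Nat.one_le_iff_ne_zero.mpr (by positivity)
      refine ⟨?_, ?_, ?_⟩
      · simp only [pow_add]
        zify [b1, b2, b3, b4, q1, q2, q3, q4, q5]
        ring
      · simp only [pow_add]
        zify [b1, b2, b3, b4, q1, q2, q3, q4, q5]
        ring
      · simp only [pow_add]
        zify [b1, b2, b3, b4, q1, q2, q3, q4, q5]
        norm_num
        have c1' : (2:ℤ) ≤ 2^n₂ := by exact_mod_cast c1
        have c2' : (2:ℤ) ≤ 2^z₂ := by exact_mod_cast c2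
        have b3' : (1:ℤ) ≤ 2^c := by exact_mod_cast b3
        have b4' : (1:ℤ) ≤ 2^s := by exact_mod_cast b4
        nlinarith [mul_nonneg (mul_nonneg (mul_nonneg (by positivity : (0:ℤ) ≤ (2:ℤ)^n₂) (by positivity : (0:ℤ) ≤ (2:ℤ)^z₂)) (by positivity : (0:ℤ) ≤ (2:ℤ)^c)) (by linarith : (0:ℤ) ≤ (2:ℤ)^s - 1), mul_nonneg (by positivity : (0:ℤ) ≤ (2:ℤ)^c) (by linarith : (0:ℤ) ≤ (2:ℤ)^z₂ - 2)]
  obtain ⟨hF2, hF3, hPle⟩ := hFacts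
  have hmK : m + ((2^z₁-1)*2^(n₂+z₂)+(2^z₂-1)) + 1 = 2^(n₁+z₁+n₂+z₂) := by
    rw [hm]; simp only [pow_add]
    zify [b1, b2, b3, b4]; ring
  have hsz : 2^(n₁+z₁+n₂+z₂) ≤ 2*m := by
    rw [hm]; simp only [pow_add]
    have c1 : (2:ℕ) ≤ 2^n₁ :=
      le_trans (by norm_num) (Nat.pow_le_pow_right (by norm_num) (by omega : 1 ≤ n₁))
    zify [b1, b2, b3, b4]
    have c1' : (2:ℤ) ≤ 2^n₁ := by exact_mod_cast c1
    have p1 : (0:ℤ) < 2^z₁*2^n₂*2^z₂ := by positivity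
    have p2 : (0:ℤ) ≤ ((2:ℤ)^n₂-1)*2^z₂ := by
      have : (1:ℤ) ≤ 2^n₂ := by exact_mod_cast b3
      have : (0:ℤ) ≤ (2:ℤ)^z₂ := by positivity
      nlinarith
    nlinarith [mul_nonneg (by linarith : (0:ℤ) ≤ (2:ℤ)^n₁ - 2) (le_of_lt p1)]
  have hmeven : 2 ∣ m := by
    rw [hm]
    have : ∃ z₂', z₂ = z₂' + 1 := ⟨z₂ - 1, by omega⟩
    obtain ⟨z₂', rfl⟩ := this
    have : ∃ e', z₁ + n₂ + (z₂' + 1) = e' + 1 := ⟨z₁ + n₂ + z₂', by omega⟩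
    obtain ⟨e', he'⟩ := this
    rw [he', pow_succ, pow_succ]
    exact Dvd.dvd.add (Dvd.dvd.mul_left (dvd_mul_left 2 _) _) ⟨(2^n₂-1)*2^z₂', by ring⟩
  have heval : eVal m = 0 := by
    unfold eVal
    exact padicValNat.eq_zero_of_not_dvd (by omega)
  have hsize : Nat.size m = n₁+z₁+n₂+z₂ := by
    apply le_antisymm
    · exact Nat.size_le.mpr (by omega)
    · have h2K : 2^(n₁+z₁+n₂+z₂-1+1) = 2^(n₁+z₁+n₂+z₂) := by congr 1; omega
      rw [pow_succ] at h2K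
      have : 2^(n₁+z₁+n₂+z₂-1) ≤ m := by omega
      have := Nat.lt_size.mpr this
      omega
  have hd0 : d0Val m = (2^z₁-1)*2^(n₂+z₂)+(2^z₂-1) := by
    unfold d0Val; rw [hsize]; omega
  have htval : tVal m = (2^z₁-1)*2^(n₂+z₂)+(2^z₂-1) - 1 := by
    unfold tVal; rw [heval, hd0]; simp
  have hdval : ∀ ℓ, dVal m ℓ = (2^z₁-1)*2^(n₂+z₂)+(2^z₂-1) - ℓ := by
    intro ℓ; unfold dVal; rw [heval, hd0]; simp
  have hrs : ∀ ℓ S, rStep m ℓ S =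
      if (m + dVal m ℓ).choose (dVal m ℓ) % 2 = 1 then (m - S) / dVal m ℓ else 0 := by
    intro ℓ S; unfold rStep; rw [heval]; norm_num
  -- BITS
  have hL : (2^n₂-1)*2^z₂ < 2^(n₂+z₂) := by
    rw [pow_add]
    have : 2^n₂ - 1 < 2^n₂ := by have : (1:ℕ) ≤ 2^n₂ := Nat.one_le_two_pow; omega
    calc (2^n₂-1)*2^z₂ < 2^n₂*2^z₂ := by
          exact Nat.mul_lt_mul_of_lt_of_le this le_rfl (by positivity)
    _ = 2^n₂*2^z₂ := rfl
  have hmHL : m = 2^(n₂+z₂) * ((2^n₁-1)*2^z₁) + (2^n₂-1)*2^z₂ := by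
    rw [hm]; simp only [pow_add]; ring
  have hmtest : ∀ i, m.testBit i =
      if i < n₂+z₂ then ((2^n₂-1)*2^z₂).testBit i else ((2^n₁-1)*2^z₁).testBit (i-(n₂+z₂)) :=
    fun i => testBit_blockpair i hmHL hL
  have hmbitlow : ∀ i, i < z₂ → m.testBit i = false := by
    intro i hi
    rw [hmtest, if_pos (by omega), testBit_block]
    simp; omega
  have hmbitset : ∀ i, z₂ ≤ i → i < n₂+z₂ → m.testBit i = true := by
    intro i hi1 hi2
    rw [hmtest, if_pos (by omega), testBit_block]
    simp; omega
  have hmbitmid : ∀ i, n₂+z₂ ≤ i → i < n₂+z₂+z₁ → m.testBit i = false := by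
    intro i hi1 hi2
    rw [hmtest, if_neg (by omega), testBit_block]
    simp; omega
  -- D1
  have hD1test : ∀ i, ((2^z₁-1)*2^(n₂+z₂)+(2^z₂-1)).testBit i =
      if i < n₂+z₂ then (2^z₂-1).testBit i else (2^z₁-1).testBit (i-(n₂+z₂)) := by
    intro i
    apply testBit_blockpair i (by ring)
    calc 2^z₂-1 < 2^z₂ := by omega
    _ ≤ 2^(n₂+z₂) := Nat.pow_le_pow_right (by norm_num) (by omega)
  have hD1disj : BitDisj m ((2^z₁-1)*2^(n₂+z₂)+(2^z₂-1)) := by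
    intro i ⟨ha, hb⟩
    rcases lt_or_ge i z₂ with hi | hi
    · rw [hmbitlow i hi] at ha; exact Bool.noConfusion ha
    rcases lt_or_ge i (n₂+z₂) with hi2 | hi2
    · rw [hD1test, if_pos hi2, Nat.testBit_two_pow_sub_one] at hb
      simp at hb; omega
    rcases lt_or_ge i (n₂+z₂+z₁) with hi3 | hi3
    · rw [hmbitmid i hi2 hi3] at ha; exact Bool.noConfusion ha
    · rw [hD1test, if_neg (by omega), Nat.testBit_two_pow_sub_one] at hb
      simp at hb; omega
  -- D2 (with P abstract, P < 2^z₁)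
  have hD2disj : ∀ P : ℕ, P < 2^z₁ → BitDisj m (P*2^(n₂+z₂)+(2^z₂-1)) := by
    intro P hP i ⟨ha, hb⟩
    have hD2test : (P*2^(n₂+z₂)+(2^z₂-1)).testBit i =
        if i < n₂+z₂ then (2^z₂-1).testBit i else P.testBit (i-(n₂+z₂)) := by
      apply testBit_blockpair i (by ring)
      calc 2^z₂-1 < 2^z₂ := by omega
      _ ≤ 2^(n₂+z₂) := Nat.pow_le_pow_right (by norm_num) (by omega)
    rcases lt_or_ge i z₂ with hi | hi
    · rw [hmbitlow i hi] at ha; exact Bool.noConfusion ha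
    rcases lt_or_ge i (n₂+z₂) with hi2 | hi2
    · rw [hD2test, if_pos hi2, Nat.testBit_two_pow_sub_one] at hb
      simp at hb; omega
    rcases lt_or_ge i (n₂+z₂+z₁) with hi3 | hi3
    · rw [hmbitmid i hi2 hi3] at ha; exact Bool.noConfusion ha
    · rw [hD2test, if_neg (by omega)] at hb
      have : P < 2^(i-(n₂+z₂)) :=
        lt_of_lt_of_le hP (Nat.pow_le_pow_right (by norm_num) (by omega))
      rw [Nat.testBit_lt_two_pow this] at hb; exact Bool.noConfusion hb
  -- small D (any y ≤ z₂): BitDisj m (2^y - 1)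
  have hDsmalldisj : ∀ y, y ≤ z₂ → BitDisj m (2^y-1) := by
    intro y hy i ⟨ha, hb⟩
    rw [Nat.testBit_two_pow_sub_one] at hb
    simp at hb
    rw [hmbitlow i (by omega)] at ha; exact Bool.noConfusion ha
  -- generic consequence
  have hdlow : ∀ d, BitDisj m d → d % 2^(n₂+z₂) < 2^z₂ := by
    intro d hd
    apply lt_pow_of_bits_false
    intro i hi
    rw [Nat.testBit_mod_two_pow]
    rcases lt_or_ge i (n₂+z₂) with hi2 | hi2
    · have : d.testBit i = false := by
        by_contra hne
        exact hd i ⟨hmbitset i hi hi2, by revert hne; cases d.testBit i <;> simp⟩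
      simp [this]
    · simp; omega
  -- instantiate the core lemma
  have hP1 : 1 ≤ (2^n₂-1)*2^(n₁-n₂)+(2^(n₁-n₂-z₂)-1) := by
    have c1 : (2:ℕ) ≤ 2^n₂ :=
      le_trans (by norm_num) (Nat.pow_le_pow_right (by norm_num) hn₂)
    have : (1:ℕ) ≤ 2^(n₁-n₂) := Nat.one_le_two_pow
    have : 1*1 ≤ (2^n₂-1)*2^(n₁-n₂) := Nat.mul_le_mul (by omega) (by omega)
    omega
  have hMex : 2^(min n₂ (n₁ - z₂))*2^z₂ = 2^(min n₂ (n₁ - z₂)+z₂) := (pow_add 2 _ _).symm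
  have hMQ : 2^(min n₂ (n₁ - z₂)+z₂) ≤ 2^(n₂+z₂) :=
    Nat.pow_le_pow_right (by norm_num) (by omega)
  have hlowQ : (2^z₂-1) + (2^(min n₂ (n₁ - z₂))-1)*2^z₂ < 2^(n₂+z₂) := by
    have he : (2^z₂-1) + (2^(min n₂ (n₁ - z₂))-1)*2^z₂ + 1 = 2^(min n₂ (n₁ - z₂))*2^z₂ := by
      zify [b4, b5]; ring
    omega
  have hR2Q : (2^(min n₂ (n₁ - z₂))-1)*2^z₂ < 2^(n₂+z₂) := by omega
  have h3 : (2^(min n₂ (n₁ - z₂))-1)*2^z₂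
      = (2^z₂-1)*(2^(min n₂ (n₁ - z₂))-1) + (2^(min n₂ (n₁ - z₂))-1) := by
    zify [b4, b5]; ring
  have hMZ : 2^(min n₂ (n₁ - z₂)) ≤ 2^z₂ := Nat.pow_le_pow_right (by norm_num) (by omega)
  have hZQ : 2^z₂ ≤ 2^(n₂+z₂) := Nat.pow_le_pow_right (by norm_num) (by omega)
  have hN2 : (2:ℕ) ≤ 2^n₁ :=
    le_trans (by norm_num) (Nat.pow_le_pow_right (by norm_num) (by omega : 1 ≤ n₁))
  have hZ2 : (2:ℕ) ≤ 2^z₂ :=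
    le_trans (by norm_num) (Nat.pow_le_pow_right (by norm_num) (by omega : 1 ≤ z₂))
  have hM2 : (2:ℕ) ≤ 2^(min n₂ (n₁ - z₂)) :=
    le_trans (by norm_num) (Nat.pow_le_pow_right (by norm_num) hmn1)
  have hR1D1 : (((2^n₂-1)*2^(n₁-n₂)+(2^(n₁-n₂-z₂)-1))*2^(n₂+z₂)+(2^z₂-1))
      + (2^(min n₂ (n₁ - z₂))-1)*2^z₂ < (2^z₁-1)*2^(n₂+z₂)+(2^z₂-1) := by
    have t1 : ((2^n₂-1)*2^(n₁-n₂)+(2^(n₁-n₂-z₂)-1)+1) * 2^(n₂+z₂) ≤ (2^z₁-1)*2^(n₂+z₂) :=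
      Nat.mul_le_mul_right _ (by omega)
    have t2 : ((2^n₂-1)*2^(n₁-n₂)+(2^(n₁-n₂-z₂)-1)+1) * 2^(n₂+z₂)
        = ((2^n₂-1)*2^(n₁-n₂)+(2^(n₁-n₂-z₂)-1))*2^(n₂+z₂) + 2^(n₂+z₂) := by ring
    omega
  have h1 : m = ((2^z₁-1)*2^(n₂+z₂)+(2^z₂-1))*(2^n₁-1)
      + ((((2^n₂-1)*2^(n₁-n₂)+(2^(n₁-n₂-z₂)-1))*2^(n₂+z₂)+(2^z₂-1))
         + (2^(min n₂ (n₁ - z₂))-1)*2^z₂) := by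
    rw [hF2, hF3]
  have key := step_aux m ((2^z₁-1)*2^(n₂+z₂)+(2^z₂-1))
      (((2^n₂-1)*2^(n₁-n₂)+(2^(n₁-n₂-z₂)-1))*2^(n₂+z₂)+(2^z₂-1))
      ((2^n₂-1)*2^(n₁-n₂)+(2^(n₁-n₂-z₂)-1))
      (2^(n₂+z₂)) (2^z₂) (2^(min n₂ (n₁ - z₂))) (2^n₁)
      ((2^(min n₂ (n₁ - z₂))-1)*2^z₂)
      hrs hdval htval
      h1
      rfl h3 hR2Q hMZ hZQ hN2 hZ2 hM2 hP1 hR1D1 hlowQ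
      ((choose_parity m _).mpr hD1disj)
      ((choose_parity m _).mpr (hD2disj _ (by omega)))
      ((choose_parity m _).mpr (hDsmalldisj z₂ le_rfl))
      ((choose_parity m _).mpr (hDsmalldisj (min n₂ (n₁ - z₂)) (by omega)))
      (fun d hd => hdlow d ((choose_parity m d).mp hd))
  obtain ⟨hsum, hvals⟩ := key
  constructor
  · exact hsum
  · intro ℓ hℓ
    rw [htval] at hℓ
    rw [hvals ℓ hℓ, hd0]
    have hbr : (if n₁ - z₂ ≤ n₂ then (2^n₂-1)*2^(n₁+z₂)+(2^z₂-1)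
        else (2^n₂-1)*2^(n₁+z₂)+(2^(n₁-n₂-z₂)-1)*2^(n₂+z₂)+(2^z₂-1))
        = ((2^n₂-1)*2^(n₁-n₂)+(2^(n₁-n₂-z₂)-1))*2^(n₂+z₂)+(2^z₂-1) := by
      have hexp : 2^(n₁-n₂)*2^(n₂+z₂) = 2^(n₁+z₂) := by
        rw [← pow_add]; congr 1; omega
      split_ifs with hcase
      · have h0 : n₁-n₂-z₂ = 0 := by omega
        rw [h0]
        simp only [pow_zero]
        rw [add_mul, mul_assoc, hexp]
        norm_num
      · rw [add_mul, mul_assoc, hexp]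
    rw [hbr]
    simp only [fAux, Nat.sub_self]
end

section
/- Define h(p) to be the mod-2 residue of the binomial coefficient C(6p + 1, 2p). Then for every integer c ≥ 2: (a) h(2^{c-1} + p) = h(p) for all integers p with 0 ≤ p < 2^{c-2}; and (b) h(2^{c-1} + p) = 0 for all integers p with 2^{c-2} ≤ p < 2^{c-1}. (This encodes the Fibonacci-type fractal structure of the parities of the coefficients C(3i+1, i) for even i: the word f_c of the first 2^c values of h is the concatenation of f_{c-1}, then f_{c-2}, then 2^{c-2} zeros.) -/
/-- `hPar p` is the mod-2 residue of `C(6p + 1, 2p)`, i.e. of `C(3i+1, i)` for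
even `i = 2p`. -/
def hPar (p : ℕ) : ℕ := (6 * p + 1).choose (2 * p) % 2

/-- Lucas' theorem step at the prime 2. -/
lemma parStep (n k : ℕ) :
    n.choose k % 2 = (Nat.choose (n % 2) (k % 2) * Nat.choose (n / 2) (k / 2)) % 2 :=
  @Choose.choose_modEq_choose_mod_mul_choose_div_nat n k 2 ⟨Nat.prime_two⟩

def gP (p : ℕ) : ℕ := (3 * p).choose p % 2
def gP' (p : ℕ) : ℕ := (3 * p + 1).choose p % 2

lemma gP_even (q : ℕ) : gP (2 * q) = gP q := by
  unfold gP
  rw [show 3 * (2 * q) = 2 * (3 * q) by ring, parStep]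
  simp [Nat.mul_div_cancel_left, Nat.mul_mod_right, Nat.mod_mod]

lemma gP_odd (q : ℕ) : gP (2 * q + 1) = gP' q := by
  unfold gP gP'
  rw [show 3 * (2 * q + 1) = 2 * (3 * q + 1) + 1 by ring, parStep]
  have h1 : (2 * (3 * q + 1) + 1) % 2 = 1 := by omega
  have h2 : (2 * (3 * q + 1) + 1) / 2 = 3 * q + 1 := by omega
  have h3 : (2 * q + 1) % 2 = 1 := by omega
  have h4 : (2 * q + 1) / 2 = q := by omega
  rw [h1, h2, h3, h4]
  simp [Nat.mod_mod]

lemma gP'_even (q : ℕ) : gP' (2 * q) = gP q := by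
  unfold gP gP'
  rw [show 3 * (2 * q) + 1 = 2 * (3 * q) + 1 by ring, parStep]
  have h1 : (2 * (3 * q) + 1) % 2 = 1 := by omega
  have h2 : (2 * (3 * q) + 1) / 2 = 3 * q := by omega
  have h3 : (2 * q) % 2 = 0 := by omega
  have h4 : (2 * q) / 2 = q := by omega
  rw [h1, h2, h3, h4]
  simp [Nat.mod_mod]

lemma gP'_odd (q : ℕ) : gP' (2 * q + 1) = 0 := by
  unfold gP'
  rw [show 3 * (2 * q + 1) + 1 = 2 * (3 * q + 2) by ring, parStep]
  have h1 : (2 * (3 * q + 2)) % 2 = 0 := by omega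
  have h3 : (2 * q + 1) % 2 = 1 := by omega
  rw [h1, h3]
  simp

lemma gP_main (a : ℕ) :
    (∀ p < 2 ^ a, gP (2 ^ (a + 1) + p) = gP p) ∧
    (∀ p, 2 ^ a ≤ p → p < 2 ^ (a + 1) → gP (2 ^ (a + 1) + p) = 0) ∧
    (∀ p < 2 ^ a, gP' (2 ^ (a + 1) + p) = gP' p) ∧
    (∀ p, 2 ^ a ≤ p → p < 2 ^ (a + 1) → gP' (2 ^ (a + 1) + p) = 0) := by
  induction a with
  | zero =>
    refine ⟨?_, ?_, ?_, ?_⟩ <;> intro p <;> intros <;> interval_cases p <;> decide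
  | succ a ih =>
    obtain ⟨A, B, A', B'⟩ := ih
    have h2p : (2:ℕ) ^ (a + 1) = 2 * 2 ^ a := by rw [pow_succ, mul_comm]
    have h2pp : (2:ℕ) ^ (a + 2) = 2 * 2 ^ (a + 1) := by rw [pow_succ, mul_comm]
    refine ⟨?_, ?_, ?_, ?_⟩ <;> intro p <;> intros hp1 <;> try intro hp2
    · -- A(a+1)
      rcases Nat.even_or_odd p with ⟨q, hq⟩ | ⟨q, hq⟩
      · rw [show 2 ^ (a + 1 + 1) + p = 2 * (2 ^ (a + 1) + q) by omega, gP_even,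
          A q (by omega), show p = 2 * q by omega, gP_even]
      · rw [show 2 ^ (a + 1 + 1) + p = 2 * (2 ^ (a + 1) + q) + 1 by omega, gP_odd,
          A' q (by omega), show p = 2 * q + 1 by omega, gP_odd]
    · -- B(a+1)
      rcases Nat.even_or_odd p with ⟨q, hq⟩ | ⟨q, hq⟩
      · rw [show 2 ^ (a + 1 + 1) + p = 2 * (2 ^ (a + 1) + q) by omega, gP_even]
        exact B q (by omega) (by omega)
      · rw [show 2 ^ (a + 1 + 1) + p = 2 * (2 ^ (a + 1) + q) + 1 by omega, gP_odd]
        exact B' q (by omega) (by omega)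
    · -- A'(a+1)
      rcases Nat.even_or_odd p with ⟨q, hq⟩ | ⟨q, hq⟩
      · rw [show 2 ^ (a + 1 + 1) + p = 2 * (2 ^ (a + 1) + q) by omega, gP'_even,
          A q (by omega), show p = 2 * q by omega, gP'_even]
      · rw [show 2 ^ (a + 1 + 1) + p = 2 * (2 ^ (a + 1) + q) + 1 by omega, gP'_odd,
          show p = 2 * q + 1 by omega, gP'_odd]
    · -- B'(a+1)
      rcases Nat.even_or_odd p with ⟨q, hq⟩ | ⟨q, hq⟩
      · rw [show 2 ^ (a + 1 + 1) + p = 2 * (2 ^ (a + 1) + q) by omega, gP'_even]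
        exact B q (by omega) (by omega)
      · rw [show 2 ^ (a + 1 + 1) + p = 2 * (2 ^ (a + 1) + q) + 1 by omega, gP'_odd]

lemma hPar_eq_gP (p : ℕ) : hPar p = gP p := by
  unfold hPar gP
  rw [show 6 * p + 1 = 2 * (3 * p) + 1 by ring, parStep]
  have h1 : (2 * (3 * p) + 1) % 2 = 1 := by omega
  have h2 : (2 * (3 * p) + 1) / 2 = 3 * p := by omega
  have h3 : (2 * p) % 2 = 0 := by omega
  have h4 : (2 * p) / 2 = p := by omega
  rw [h1, h2, h3, h4]
  simp [Nat.mod_mod]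

/-- For every `c ≥ 2`: (a) `h(2^{c-1} + p) = h(p)` for
`0 ≤ p < 2^{c-2}`, and (b) `h(2^{c-1} + p) = 0` for `2^{c-2} ≤ p < 2^{c-1}`.
This is the Fibonacci-type fractal structure: the word `f_c` of the first `2^c`
values of `h` is the concatenation of `f_{c-1}`, `f_{c-2}` and `2^{c-2}` zeros. -/
theorem hPar_fractal (c : ℕ) (hc : 2 ≤ c) :
    (∀ p < 2 ^ (c - 2), hPar (2 ^ (c - 1) + p) = hPar p) ∧
    (∀ p, 2 ^ (c - 2) ≤ p → p < 2 ^ (c - 1) → hPar (2 ^ (c - 1) + p) = 0) := by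
  obtain ⟨a, rfl⟩ : ∃ a, c = a + 2 := ⟨c - 2, by omega⟩
  have hm := gP_main a
  simp only [Nat.add_sub_cancel, show a + 2 - 1 = a + 1 by omega, hPar_eq_gP]
  exact ⟨hm.1, hm.2.1⟩
end
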